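/- Let R be a perfect ring and T a sincere presilting R-module. Then T is pretilting if and only if Ext^2_R(T,X) = 0 for all X ∈ Gen T. -/

import Mathlib

open CategoryTheory CategoryTheory.Limits

universe u

noncomputable section

variable {R : Type u} [Ring R]

/-- The direct sum of `J` copies of `T`. -/
def copies (T : ModuleCat.{u} R) (J : Type u) : ModuleCat.{u} R :=
  ModuleCat.of R (J →₀ T)

/-- `X` belongs to `Gen T`: it is a quotient of a direct sum of copies of `T`. -/
def MemGen (T X : ModuleCat.{u} R) : Prop :=
  ∃ (J : Type u) (f : copies T J ⟶ X), Function.Surjective f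

/-- `Y` belongs to `Add T`: it is a direct summand of a direct sum of copies of `T`. -/
def MemAdd (T Y : ModuleCat.{u} R) : Prop :=
  ∃ (J : Type u) (s : Y ⟶ copies T J) (r : copies T J ⟶ Y), s ≫ r = 𝟙 Y

/-- `X` belongs to `Pres T`: there is an exact sequence `T₁ → T₀ → X → 0` with
`T₁, T₀ ∈ Add T`. -/
def MemPres (T X : ModuleCat.{u} R) : Prop :=
  ∃ (T₁ T₀ : ModuleCat.{u} R) (f : T₁ ⟶ T₀) (g : T₀ ⟶ X),
    MemAdd T T₁ ∧ MemAdd T T₀ ∧ Function.Surjective g ∧ LinearMap.range f.hom = LinearMap.ker g.hom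

/-- Vanishing of `Ext^n(T, M)`. -/
def ExtVanish (n : ℕ) (T M : ModuleCat.{u} R) : Prop :=
  Subsingleton (((Ext ℤ (ModuleCat.{u} R) n).obj (Opposite.op T)).obj M)

/-- `Hom_R(T, M) = 0`. -/
def HomZero (T M : ModuleCat.{u} R) : Prop := ∀ f : T ⟶ M, f = 0

/-- `T` is sincere: `Hom_R(P, T) ≠ 0` for every nonzero projective `P`. -/
def Sincere (T : ModuleCat.{u} R) : Prop :=
  ∀ P : ModuleCat.{u} R, Projective P → Nontrivial P → ∃ f : P ⟶ T, f ≠ 0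

/-- `T` is cosincere: `Hom_R(T, I) ≠ 0` for every nonzero injective `I`. -/
def Cosincere (T : ModuleCat.{u} R) : Prop :=
  ∀ I : ModuleCat.{u} R, Injective I → Nontrivial I → ∃ f : T ⟶ I, f ≠ 0

/-- `M` has a projective cover: a surjection `P ↠ M` from a projective which is a
minimal epimorphism. -/
def HasProjCover (M : ModuleCat.{u} R) : Prop :=
  ∃ (P : ModuleCat.{u} R) (f : P ⟶ M), Projective P ∧ Function.Surjective f ∧
    ∀ (N : ModuleCat.{u} R) (g : N ⟶ P), Function.Surjective (g ≫ f) → Function.Surjective g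

/-- `R` is a (two-sided) perfect ring: every left and every right module has a
projective cover. -/
def IsPerfect (R : Type u) [Ring R] : Prop :=
  (∀ M : ModuleCat.{u} R, HasProjCover M) ∧ (∀ M : ModuleCat.{u} Rᵐᵒᵖ, HasProjCover M)

/-- `X ∈ D_σ`: the map `Hom_R(σ, X)` is surjective. -/
def MemD {P₁ P₀ : ModuleCat.{u} R} (σ : P₁ ⟶ P₀) (X : ModuleCat.{u} R) : Prop :=
  ∀ g : P₁ ⟶ X, ∃ h : P₀ ⟶ X, σ ≫ h = g

/-- `T` is presilting: it has a projective presentation `σ` with `Gen T ⊆ D_σ`. -/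
def IsPresilting (T : ModuleCat.{u} R) : Prop :=
  ∃ (P₁ P₀ : ModuleCat.{u} R) (σ : P₁ ⟶ P₀) (π : P₀ ⟶ T),
    Projective P₁ ∧ Projective P₀ ∧ Function.Surjective π ∧
    LinearMap.range σ.hom = LinearMap.ker π.hom ∧ ∀ X, MemGen T X → MemD σ X

/-- `T` is silting: it has a projective presentation `σ` with `Gen T = D_σ`. -/
def IsSilting (T : ModuleCat.{u} R) : Prop :=
  ∃ (P₁ P₀ : ModuleCat.{u} R) (σ : P₁ ⟶ P₀) (π : P₀ ⟶ T),
    Projective P₁ ∧ Projective P₀ ∧ Function.Surjective π ∧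
    LinearMap.range σ.hom = LinearMap.ker π.hom ∧ ∀ X, MemGen T X ↔ MemD σ X

/-- Projective dimension at most `n`. -/
def PdLE : ℕ → ModuleCat.{u} R → Prop
  | 0, T => Projective T
  | n + 1, T => ∃ (P : ModuleCat.{u} R) (f : P ⟶ T), Projective P ∧ Function.Surjective f ∧
      PdLE n (ModuleCat.of R (LinearMap.ker f.hom))

/-- `T` is pretilting: `pd T ≤ 1` and `Ext¹(T, T^(J)) = 0` for all sets `J`. -/
def IsPretilting (T : ModuleCat.{u} R) : Prop :=
  PdLE 1 T ∧ ∀ J : Type u, ExtVanish 1 T (copies T J)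

/-- `T` is tilting: `Gen T = Ker Ext¹(T, -)`. -/
def IsTilting (T : ModuleCat.{u} R) : Prop :=
  ∀ X : ModuleCat.{u} R, MemGen T X ↔ ExtVanish 1 T X

/-- The vanishing condition (T3)′. -/
def VanishT3' (T : ModuleCat.{u} R) : Prop :=
  ∀ M : ModuleCat.{u} R, HomZero T M → ExtVanish 1 T M → Subsingleton M

end


noncomputable section AuxStmt13

open CategoryTheory CategoryTheory.Limits

variable {R : Type u} [Ring R]

lemma aux_subsingleton_iff_isZero (M : ModuleCat.{u} ℤ) : Subsingleton M ↔ IsZero M := by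
  constructor
  · intro h; exact ModuleCat.isZero_of_subsingleton M
  · intro h
    refine ⟨fun a b => ?_⟩
    have h0 : (𝟙 M : M ⟶ M) = 0 := h.eq_of_src _ _
    have key : ∀ x : M, x = 0 := fun x => by
      calc x = (𝟙 M : M ⟶ M) x := rfl
      _ = (0 : M ⟶ M) x := by rw [h0]
      _ = 0 := rfl
    rw [key a, key b]

/-- Data of a projective resolution given by explicit exactness conditions. -/
structure ResData (T : ModuleCat.{u} R) where
  P : ℕ → ModuleCat.{u} R
  proj : ∀ n, Projective (P n)
  d : ∀ n, P (n + 1) ⟶ P n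
  pi0 : P 0 ⟶ T
  surj : Function.Surjective pi0
  ex0 : LinearMap.range (d 0).hom = LinearMap.ker pi0.hom
  ex : ∀ n, LinearMap.range (d (n + 1)).hom = LinearMap.ker (d n).hom

namespace ResData

variable {T : ModuleCat.{u} R} (D : ResData T)

lemma sq : ∀ n, D.d (n + 1) ≫ D.d n = 0 := fun n => by
  ext x
  have : D.d (n+1) x ∈ LinearMap.ker (D.d n).hom := by
    rw [← D.ex n]; exact ⟨x, rfl⟩
  simpa using this

def complex : ChainComplex (ModuleCat.{u} R) ℕ :=
  ChainComplex.of D.P D.d D.sq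

lemma complex_exactAt_succ (n : ℕ) : D.complex.ExactAt (n + 1) := by
  rw [HomologicalComplex.exactAt_iff' _ (n + 2) (n + 1) n (by simp) (by simp)]
  rw [ShortComplex.moduleCat_exact_iff_range_eq_ker]
  dsimp [complex, HomologicalComplex.sc', HomologicalComplex.shortComplexFunctor']
  rw [show n + 2 = n + 1 + 1 from rfl,
    ChainComplex.of_d D.P D.d (n + 1), ChainComplex.of_d D.P D.d n]
  exact D.ex n

lemma d10 : D.complex.d 1 0 = D.d 0 := ChainComplex.of_d D.P D.d 0

def projRes : ProjectiveResolution T where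
  complex := D.complex
  projective n := D.proj n
  π := (ChainComplex.toSingle₀Equiv _ _).symm ⟨D.pi0, by
    rw [D.d10]
    ext x
    have : D.d 0 x ∈ LinearMap.ker D.pi0.hom := by rw [← D.ex0]; exact ⟨x, rfl⟩
    exact this⟩
  quasiIso := ⟨fun n => by
    cases n with
    | zero =>
      rw [ChainComplex.quasiIsoAt₀_iff, ShortComplex.quasiIso_iff_of_zeros']
      · constructor
        · rw [ShortComplex.moduleCat_exact_iff_range_eq_ker]
          dsimp [HomologicalComplex.shortComplexFunctor']
          simp only [ChainComplex.toSingle₀Equiv_symm_apply_f_zero, D.d10]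
          exact D.ex0
        · dsimp [HomologicalComplex.shortComplexFunctor']
          exact (ModuleCat.epi_iff_surjective _).2 D.surj
      all_goals rfl
    | succ n =>
      rw [quasiIsoAt_iff_exactAt']
      · exact D.complex_exactAt_succ n
      · apply ChainComplex.exactAt_succ_single_obj⟩

lemma extVanish_iff (n : ℕ) (X : ModuleCat.{u} R) :
    ExtVanish (n + 1) T X ↔ ∀ g : D.P (n + 1) ⟶ X, D.d (n + 1) ≫ g = 0 →
      ∃ h : D.P n ⟶ X, D.d n ≫ h = g := by
  have hiso := D.projRes.isoExt (R := ℤ) (n + 1) X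
  rw [show ExtVanish (n + 1) T X ↔
      IsZero ((D.projRes.complex.linearYonedaObj ℤ X).homology (n + 1)) from
    (aux_subsingleton_iff_isZero _).trans
      ⟨fun h => h.of_iso hiso.symm, fun h => h.of_iso hiso⟩]
  rw [← HomologicalComplex.exactAt_iff_isZero_homology,
    HomologicalComplex.exactAt_iff' _ n (n + 1) (n + 2) (by simp) (by simp),
    ShortComplex.moduleCat_exact_iff]
  dsimp [HomologicalComplex.sc', HomologicalComplex.shortComplexFunctor', ResData.projRes]
  show (∀ x₂ : (D.P (n + 1) ⟶ X), D.complex.d (n + 2) (n + 1) ≫ x₂ = 0 →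
      ∃ x₁ : D.P n ⟶ X, D.complex.d (n + 1) n ≫ x₁ = x₂) ↔ _
  rw [show D.complex.d (n + 2) (n + 1) = D.d (n + 1) from
        ChainComplex.of_d D.P D.d (n + 1),
      show D.complex.d (n + 1) n = D.d n from ChainComplex.of_d D.P D.d n]
  exact Iff.rfl

end ResData

lemma memGen_self (T : ModuleCat.{u} R) : MemGen T T := by
  refine ⟨PUnit, ModuleCat.ofHom (Finsupp.lapply default : (PUnit →₀ T) →ₗ[R] T), fun x => ?_⟩
  exact ⟨Finsupp.single default x, Finsupp.single_eq_same⟩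

lemma memGen_of_surjective {T X Y : ModuleCat.{u} R} (h : MemGen T X) (f : X ⟶ Y)
    (hf : Function.Surjective f) : MemGen T Y := by
  obtain ⟨J, g, hg⟩ := h
  exact ⟨J, g ≫ f, hf.comp hg⟩

lemma memGen_copies (T : ModuleCat.{u} R) (J : Type u) : MemGen T (copies T J) :=
  ⟨J, 𝟙 _, Function.surjective_id⟩

/-- One step of a projective resolution: a projective mapping onto the kernel. -/
def nextStep {A B : ModuleCat.{u} R} (f : A ⟶ B) : Σ A' : ModuleCat.{u} R, A' ⟶ A :=
  ⟨Projective.over (ModuleCat.of R (LinearMap.ker f.hom)),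
    Projective.π (ModuleCat.of R (LinearMap.ker f.hom)) ≫
      ModuleCat.ofHom (LinearMap.ker f.hom).subtype⟩

lemma nextStep_range {A B : ModuleCat.{u} R} (f : A ⟶ B) :
    LinearMap.range (nextStep f).2.hom = LinearMap.ker f.hom := by
  have hsurj : Function.Surjective (Projective.π (ModuleCat.of R (LinearMap.ker f.hom))).hom :=
    (ModuleCat.epi_iff_surjective _).1 inferInstance
  show LinearMap.range ((LinearMap.ker f.hom).subtype ∘ₗ
    (Projective.π (ModuleCat.of R (LinearMap.ker f.hom))).hom) = _
  rw [LinearMap.range_comp, LinearMap.range_eq_top.2 hsurj, Submodule.map_subtype_top]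

instance nextStep_proj {A B : ModuleCat.{u} R} (f : A ⟶ B) : Projective (nextStep f).1 :=
  Projective.projective_over _

/-- The tail of a projective resolution built from `Projective.over`. -/
def seqAux {A B : ModuleCat.{u} R} (f : A ⟶ B) : ℕ → Σ A' : ModuleCat.{u} R, Σ A'' : ModuleCat.{u} R, A'' ⟶ A'
  | 0 => ⟨A, nextStep f⟩
  | n + 1 => ⟨(seqAux f n).2.1, nextStep (seqAux f n).2.2⟩

lemma seqAux_proj {A B : ModuleCat.{u} R} (f : A ⟶ B) (n : ℕ) :
    Projective (seqAux f n).2.1 := by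
  cases n with
  | zero => exact Projective.projective_over _
  | succ n => exact Projective.projective_over _

end AuxStmt13

/-- over a perfect ring, a sincere presilting module is pretilting iff
`Gen T ⊆ Ker Ext²(T,-)`. -/
theorem stmt_13 {R : Type u} [Ring R] (hR : IsPerfect R)
    (T : ModuleCat.{u} R) (hsin : Sincere T) (hpre : IsPresilting T) :
    IsPretilting T ↔ ∀ X : ModuleCat.{u} R, MemGen T X → ExtVanish 2 T X := by
  obtain ⟨P₁, P₀, σ, π, hP₁, hP₀, hπ, hexact, hD⟩ := hpre
  constructor
  · rintro ⟨⟨P, f, hP, hf, hK⟩, -⟩ X _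
    let D : ResData T := {
      P := fun n => match n with
        | 0 => P
        | 1 => ModuleCat.of R (LinearMap.ker f.hom)
        | _ + 2 => ModuleCat.of R PUnit
      proj := fun n => match n with
        | 0 => hP
        | 1 => hK
        | _ + 2 => (ModuleCat.isZero_of_subsingleton _).projective
      d := fun n => match n with
        | 0 => ModuleCat.ofHom (LinearMap.ker f.hom).subtype
        | _ + 1 => 0
      pi0 := f
      surj := hf
      ex0 := by exact Submodule.range_subtype _
      ex := fun n => match n with
        | 0 => by
            refine le_antisymm ?_ ?_
            · rintro x ⟨y, rfl⟩
              exact Submodule.zero_mem _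
            · change LinearMap.ker (LinearMap.ker f.hom).subtype ≤ _
              rw [Submodule.ker_subtype]
              exact bot_le
        | n + 1 => by
            ext x
            have hx : x = 0 := Subsingleton.elim x 0
            rw [hx]
            simp }
    refine (D.extVanish_iff 1 X).2 ?_
    intro g _
    refine ⟨0, ?_⟩
    ext y
    have hy : y = 0 := Subsingleton.elim y 0
    rw [hy]
    simp
  · intro hExt2
    obtain ⟨hLcov, -⟩ := hR
    obtain ⟨Q, q, hQproj, hq, hqcov⟩ := hLcov (ModuleCat.of R (LinearMap.ker σ.hom))
    let d1 : Q ⟶ P₁ := q ≫ ModuleCat.ofHom (LinearMap.ker σ.hom).subtype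
    have hd1range : LinearMap.range d1.hom = LinearMap.ker σ.hom := by
      rw [show d1.hom = (LinearMap.ker σ.hom).subtype ∘ₗ q.hom from rfl,
        LinearMap.range_comp, LinearMap.range_eq_top.2 hq, Submodule.map_subtype_top]
    have hd1ker : LinearMap.ker d1.hom = LinearMap.ker q.hom := by
      rw [show d1.hom = (LinearMap.ker σ.hom).subtype ∘ₗ q.hom from rfl,
        LinearMap.ker_comp, Submodule.ker_subtype, Submodule.comap_bot]
    let D : ResData T := {
      P := fun n => match n with
        | 0 => P₀ | 1 => P₁ | 2 => Q | n + 3 => (seqAux d1 n).2.1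
      proj := fun n => match n with
        | 0 => hP₀ | 1 => hP₁ | 2 => hQproj | n + 3 => seqAux_proj d1 n
      d := fun n => match n with
        | 0 => σ | 1 => d1 | 2 => (seqAux d1 0).2.2 | n + 3 => (seqAux d1 (n + 1)).2.2
      pi0 := π
      surj := hπ
      ex0 := hexact
      ex := fun n => match n with
        | 0 => hd1range
        | 1 => nextStep_range d1
        | 2 => nextStep_range _
        | n + 3 => nextStep_range _ }
    have hd1σ : d1 ≫ σ = 0 := by
      ext x
      have hx : d1 x ∈ LinearMap.ker σ.hom := hd1range ▸ ⟨x, rfl⟩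
      simpa using hx
    have hQzero : ∀ X : ModuleCat.{u} R, MemGen T X → ∀ g : Q ⟶ X,
        LinearMap.ker q.hom ≤ LinearMap.ker g.hom → g = 0 := by
      intro X hX g hker
      obtain ⟨h, hh⟩ := (D.extVanish_iff 1 X).1 (hExt2 X hX) g (by
        ext x
        have hx : (D.d 2) x ∈ LinearMap.ker d1.hom := D.ex 1 ▸ ⟨x, rfl⟩
        rw [hd1ker] at hx
        exact hker hx)
      obtain ⟨k, hk⟩ := hD X hX h
      rw [← hh, ← hk, ← Category.assoc, hd1σ, Limits.zero_comp]
    have hL : LinearMap.ker σ.hom = ⊥ := by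
      by_contra hne
      have hntL : Nontrivial (ModuleCat.of R (LinearMap.ker σ.hom)) :=
        Submodule.nontrivial_iff_ne_bot.2 hne
      haveI := hntL
      have hntQ : Nontrivial Q := hq.nontrivial
      obtain ⟨f, hf0⟩ := hsin Q hQproj hntQ
      set W : Submodule R T := Submodule.map f.hom (LinearMap.ker q.hom) with hW
      have hmk : MemGen T (ModuleCat.of R (T ⧸ W)) :=
        memGen_of_surjective (memGen_self T) (ModuleCat.ofHom W.mkQ)
          (Submodule.mkQ_surjective W)
      have hcomp : (f ≫ (ModuleCat.ofHom W.mkQ)) = 0 := by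
        apply hQzero _ hmk
        intro x hx
        show W.mkQ (f x) = 0
        rw [Submodule.mkQ_apply, Submodule.Quotient.mk_eq_zero]
        exact ⟨x, hx, rfl⟩
      have hrange : ∀ y : Q, f y ∈ W := by
        intro y
        have h0 : W.mkQ (f y) = 0 := DFunLike.congr_fun (congrArg ModuleCat.Hom.hom hcomp) y
        rwa [Submodule.mkQ_apply, Submodule.Quotient.mk_eq_zero] at h0
      let KQ := ModuleCat.of R (LinearMap.ker q.hom)
      let WB := ModuleCat.of R W
      let aB : KQ ⟶ WB := ModuleCat.ofHom (LinearMap.codRestrict W (f.hom ∘ₗ (LinearMap.ker q.hom).subtype)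
        (fun x => ⟨x.1, x.2, rfl⟩))
      haveI haBepi : Epi aB := (ModuleCat.epi_iff_surjective _).2 (by
        rintro ⟨w, hw⟩
        obtain ⟨x, hx, rfl⟩ := hw
        exact ⟨⟨x, hx⟩, rfl⟩)
      let fB : Q ⟶ WB := ModuleCat.ofHom (LinearMap.codRestrict W f.hom hrange)
      let u : Q ⟶ KQ := Projective.factorThru fB aB
      have hu : u ≫ aB = fB := Projective.factorThru_comp fB aB
      let v : Q ⟶ Q := u ≫ ModuleCat.ofHom (LinearMap.ker q.hom).subtype
      have hfv : ∀ x, f (v x) = f x := by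
        intro x
        have h1 := DFunLike.congr_fun (congrArg ModuleCat.Hom.hom hu) x
        exact congrArg Subtype.val h1
      have hvq : ((𝟙 Q - v) ≫ q) = q := by
        ext x
        show ((q (x - v x) : LinearMap.ker σ.hom) : P₁) = q x
        rw [map_sub, show q (v x) = 0 from (u x).2, sub_zero]
      have hsur : Function.Surjective (𝟙 Q - v) :=
        hqcov Q (𝟙 Q - v) (by rw [hvq]; exact hq)
      apply hf0
      ext y
      obtain ⟨x, rfl⟩ := hsur y
      show f (x - v x) = 0
      rw [map_sub, hfv, sub_self]
    constructor
    · refine ⟨P₀, π, hP₀, hπ, ?_⟩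
      have hinj : Function.Injective σ := LinearMap.ker_eq_bot.1 hL
      rw [← hexact]
      exact Projective.of_iso
        ((LinearEquiv.ofInjective σ.hom hinj).toModuleIso) hP₁
    · intro J
      refine (D.extVanish_iff 0 (copies T J)).2 ?_
      intro g _
      exact hD (copies T J) (memGen_copies T J) g
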